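/- Counting connected sets at prescribed horizontal distance from a set (Lemma 3): Let A ⊂ ℤ² be finite. For all integers s ≥ 2 and 1 ≤ d < ∞, the number of subsets S ⊂ ℤ² that are connected (as subgraphs of ℤ²), have |S| = s and satisfy dist_h(S,A) = d, is at most (32/3)·|A|·4^{4s}. -/

import Mathlib

/-!
If `dist_h(S, A) = d`, then `S` contains one of the at most `2|A|` sites `y ± (d, 0)`, `y ∈ A`.
A connected set of `s` sites containing `x` is the set of sites visited by a closed walk from `x`
of length `2(s - 1)`: grow it one site at a time, attaching each new neighbouring site by a
back-and-forth detour. Such a walk is determined by its `2(s - 1)` unit steps, so there are at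
most `2|A| · 4^(2(s - 1))` sets `S`.
-/

open scoped BigOperators Classical

noncomputable section

abbrev Site : Type := ℤ × ℤ

/-! ## Connectivity in the lattice `ℤ²` -/

/-- The nearest-neighbour graph on `ℤ²`. -/
def gridGraph : SimpleGraph Site where
  Adj x y := |x.1 - y.1| + |x.2 - y.2| = 1
  symm := by
    constructor
    intro x y h
    show |y.1 - x.1| + |y.2 - x.2| = 1
    change |x.1 - y.1| + |x.2 - y.2| = 1 at h
    rw [abs_sub_comm y.1 x.1, abs_sub_comm y.2 x.2]
    exact h
  loopless := by constructor; intro x h; simp at h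

/-- `S` is connected as a subgraph of `ℤ²`. -/
def ConnectedIn (S : Finset Site) : Prop :=
  (SimpleGraph.induce (↑S : Set Site) gridGraph).Connected

/-- `dist_h(S,A) = d`: the horizontal distance between `S` and `A`
(`dist_h(x,y) = |x_h − y_h|` if `x_v = y_v`, `+∞` otherwise, minimised over
pairs) equals `d`. -/
def hDistEq (S A : Finset Site) (d : ℕ) : Prop :=
  (∃ x ∈ S, ∃ y ∈ A, x.2 = y.2 ∧ (x.1 - y.1).natAbs = d) ∧
  (∀ x ∈ S, ∀ y ∈ A, x.2 = y.2 → d ≤ (x.1 - y.1).natAbs)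

open Finset

namespace SimpleGraph

variable {V : Type*} {G : SimpleGraph V}

lemma exists_adj_of_connected_induce {S T : Set V} (hS : (G.induce S).Connected)
    (hTS : T ⊆ S) {x y : V} (hxT : x ∈ T) (hyS : y ∈ S) (hyT : y ∉ T) :
    ∃ u ∈ T, ∃ w ∈ S, w ∉ T ∧ G.Adj u w := by
  obtain ⟨p⟩ := hS.preconnected ⟨x, hTS hxT⟩ ⟨y, hyS⟩
  obtain ⟨d, -, hd₁, hd₂⟩ := p.exists_boundary_dart {z | z.1 ∈ T} hxT hyT
  exact ⟨d.fst, hd₁, d.snd, d.snd.2, hd₂, d.adj⟩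

lemma Walk.exists_length_eq_add_two_support_toFinset_eq_insert {x y u w : V} (c : G.Walk x y)
    (hu : u ∈ c.support) (h : G.Adj u w) :
    ∃ c' : G.Walk x y, c'.length = c.length + 2 ∧
      c'.support.toFinset = insert w c.support.toFinset := by
  obtain ⟨q, r, rfl⟩ := Walk.mem_support_iff_exists_append.mp hu
  refine ⟨q.append (.cons h (.cons h.symm r)), ?_, ?_⟩
  · simp only [Walk.length_append, Walk.length_cons]
    omega
  · have := q.end_mem_support
    ext z
    simp only [Walk.support_append, Walk.support_cons, List.tail_cons, List.toFinset_append,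
      List.toFinset_cons, mem_union, mem_insert, List.mem_toFinset]
    rw [Walk.mem_support_iff (p := r)]
    grind

theorem exists_closed_walk_support_toFinset_eq {S : Finset V}
    (hS : (G.induce (S : Set V)).Connected) {x : V} (hx : x ∈ S) :
    ∃ c : G.Walk x x, c.support.toFinset = S ∧ c.length = 2 * (#S - 1) := by
  have grow : ∀ n < #S, ∃ c : G.Walk x x,
      c.support.toFinset ⊆ S ∧ #c.support.toFinset = n + 1 ∧ c.length = 2 * n := by
    intro n
    induction n with
    | zero => exact fun _ => ⟨.nil, by simpa using hx, by simp, rfl⟩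
    | succ n ih =>
      intro hn
      obtain ⟨c, hcS, hcard, hlen⟩ := ih (by omega)
      obtain ⟨y, hyS, hyc⟩ :=
        exists_mem_notMem_of_card_lt_card (s := c.support.toFinset) (t := S) (by omega)
      obtain ⟨u, hu, w, hwS, hwc, huw⟩ := exists_adj_of_connected_induce hS (coe_subset.2 hcS)
        (x := x) (by simp) hyS (by simpa using hyc)
      obtain ⟨c', hlen', hc'⟩ :=
        c.exists_length_eq_add_two_support_toFinset_eq_insert (by simpa using hu) huw
      refine ⟨c', ?_, ?_, ?_⟩
      · rw [hc']
        exact insert_subset hwS hcS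
      · rw [hc', card_insert_of_notMem hwc, hcard]
      · rw [hlen', hlen]
        ring
  obtain ⟨c, hcS, hcard, hlen⟩ := grow (#S - 1) (by have := card_pos.2 ⟨x, hx⟩; omega)
  exact ⟨c, eq_of_subset_of_card_le hcS (by omega), hlen⟩

variable {k : ℕ} (nbr : V → Fin k → V)

lemma Walk.exists_scanl_eq_support (hnbr : ∀ ⦃x y⦄, G.Adj x y → ∃ i, nbr x i = y)
    {x y : V} (p : G.Walk x y) :
    ∃ w : List (Fin k), w.length = p.length ∧ List.scanl nbr x w = p.support := by
  induction p with
  | nil => exact ⟨[], rfl, rfl⟩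
  | cons h p ih =>
    obtain ⟨w, hlen, hw⟩ := ih
    obtain ⟨i, rfl⟩ := hnbr h
    exact ⟨i :: w, by simp [hlen], by simp [hw]⟩

variable (G) in
def connectedFinsetsOfCard (x : V) (s : ℕ) : Set (Finset V) :=
  {S | (G.induce (S : Set V)).Connected ∧ #S = s ∧ x ∈ S}

lemma connectedFinsetsOfCard_subset_range (hnbr : ∀ ⦃x y⦄, G.Adj x y → ∃ i, nbr x i = y)
    (x : V) (s : ℕ) :
    G.connectedFinsetsOfCard x s ⊆
      Set.range fun w : Fin (2 * (s - 1)) → Fin k => (List.scanl nbr x (List.ofFn w)).toFinset := by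
  rintro S ⟨hS, rfl, hx⟩
  obtain ⟨c, hc, hlen⟩ := exists_closed_walk_support_toFinset_eq hS hx
  obtain ⟨w, hwlen, hw⟩ := c.exists_scanl_eq_support nbr hnbr
  refine ⟨fun i => w[i.cast (hwlen.trans hlen).symm], ?_⟩
  have hw' : List.ofFn (fun i : Fin (2 * (#S - 1)) => w[i.cast (hwlen.trans hlen).symm]) = w := by
    apply List.ext_getElem <;> simp [hwlen, hlen]
  simp only [hw', hw, hc]

lemma finite_connectedFinsetsOfCard (hnbr : ∀ ⦃x y⦄, G.Adj x y → ∃ i, nbr x i = y)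
    (x : V) (s : ℕ) : (G.connectedFinsetsOfCard x s).Finite :=
  (Set.finite_range _).subset (connectedFinsetsOfCard_subset_range nbr hnbr x s)

lemma ncard_connectedFinsetsOfCard_le (hnbr : ∀ ⦃x y⦄, G.Adj x y → ∃ i, nbr x i = y)
    (x : V) (s : ℕ) : (G.connectedFinsetsOfCard x s).ncard ≤ k ^ (2 * (s - 1)) :=
  calc _ ≤ _ := Set.ncard_le_ncard (connectedFinsetsOfCard_subset_range nbr hnbr x s)
        (Set.finite_range _)
    _ ≤ (Set.univ : Set (Fin (2 * (s - 1)) → Fin k)).ncard := by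
      rw [← Set.image_univ]
      exact Set.ncard_image_le
    _ = k ^ (2 * (s - 1)) := by simp [Set.ncard_univ]

end SimpleGraph

def gridStep (x : Site) (i : Fin 4) : Site := x + ![(1, 0), (-1, 0), (0, 1), (0, -1)] i

lemma exists_gridStep_eq_of_adj ⦃x y : Site⦄ (h : gridGraph.Adj x y) : ∃ i, gridStep x i = y := by
  obtain ⟨a, b⟩ := x
  obtain ⟨c, e⟩ := y
  change |a - c| + |b - e| = 1 at h
  rw [Int.abs_eq_natAbs, Int.abs_eq_natAbs] at h
  have : (c = a + 1 ∧ e = b) ∨ (c = a - 1 ∧ e = b) ∨ (c = a ∧ e = b + 1) ∨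
      (c = a ∧ e = b - 1) := by
    omega
  rcases this with ⟨rfl, rfl⟩ | ⟨rfl, rfl⟩ | ⟨rfl, rfl⟩ | ⟨rfl, rfl⟩
  · exact ⟨0, by simp [gridStep]⟩
  · exact ⟨1, by simp [gridStep, sub_eq_add_neg]⟩
  · exact ⟨2, by simp [gridStep]⟩
  · exact ⟨3, by simp [gridStep, sub_eq_add_neg]⟩

def horizontalShifts (A : Finset Site) (d : ℕ) : Finset Site :=
  A.image (· + ((d : ℤ), 0)) ∪ A.image (· - ((d : ℤ), 0))

lemma card_horizontalShifts_le (A : Finset Site) (d : ℕ) : #(horizontalShifts A d) ≤ 2 * #A := by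
  have := card_image_le (s := A) (f := (· + ((d : ℤ), 0)))
  have := card_image_le (s := A) (f := (· - ((d : ℤ), 0)))
  have := card_union_le (A.image (· + ((d : ℤ), 0))) (A.image (· - ((d : ℤ), 0)))
  rw [horizontalShifts]
  omega

lemma hDistEq.exists_mem_horizontalShifts {S A : Finset Site} {d : ℕ} (h : hDistEq S A d) :
    ∃ a ∈ horizontalShifts A d, a ∈ S := by
  obtain ⟨⟨x, hxS, y, hyA, hxy₂, hxy₁⟩, -⟩ := h
  refine ⟨x, ?_, hxS⟩
  rcases Int.natAbs_eq (x.1 - y.1) with h | h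
  · refine mem_union_left _ (mem_image.2 ⟨y, hyA, Prod.ext ?_ (by simp [hxy₂])⟩)
    simp only [Prod.fst_add]
    omega
  · refine mem_union_right _ (mem_image.2 ⟨y, hyA, Prod.ext ?_ (by simp [hxy₂])⟩)
    simp only [Prod.fst_sub]
    omega

theorem count_connected_at_hdist_general (A : Finset Site) (s d : ℕ) :
    {S : Finset Site | ConnectedIn S ∧ S.card = s ∧ hDistEq S A d}.Finite ∧
    ({S : Finset Site | ConnectedIn S ∧ S.card = s ∧ hDistEq S A d}.ncard : ℝ) ≤
      32 / 3 * (A.card : ℝ) * 4 ^ (4 * s) := by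
  set C := fun a => gridGraph.connectedFinsetsOfCard a s
  have hsub : {S : Finset Site | ConnectedIn S ∧ S.card = s ∧ hDistEq S A d} ⊆
      ⋃ a ∈ horizontalShifts A d, C a := by
    rintro S ⟨hS, hcard, hdist⟩
    obtain ⟨a, ha, haS⟩ := hdist.exists_mem_horizontalShifts
    exact Set.mem_biUnion ha ⟨hS, hcard, haS⟩
  have hfin : (⋃ a ∈ horizontalShifts A d, C a).Finite :=
    (horizontalShifts A d).finite_toSet.biUnion fun a _ =>
      gridGraph.finite_connectedFinsetsOfCard gridStep exists_gridStep_eq_of_adj a s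
  refine ⟨hfin.subset hsub, ?_⟩
  have hcount : {S : Finset Site | ConnectedIn S ∧ S.card = s ∧ hDistEq S A d}.ncard ≤
      2 * #A * 4 ^ (2 * (s - 1)) := calc
    _ ≤ (⋃ a ∈ horizontalShifts A d, C a).ncard := Set.ncard_le_ncard hsub hfin
    _ ≤ ∑ a ∈ horizontalShifts A d, (C a).ncard := (horizontalShifts A d).set_ncard_biUnion_le C
    _ ≤ #(horizontalShifts A d) * 4 ^ (2 * (s - 1)) := sum_le_card_nsmul _ _ _ fun a _ =>
      gridGraph.ncard_connectedFinsetsOfCard_le gridStep exists_gridStep_eq_of_adj a s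
    _ ≤ 2 * #A * 4 ^ (2 * (s - 1)) := Nat.mul_le_mul_right _ (card_horizontalShifts_le A d)
  calc _ ≤ ((2 * #A * 4 ^ (2 * (s - 1)) : ℕ) : ℝ) := by exact_mod_cast hcount
    _ ≤ 32 / 3 * (A.card : ℝ) * 4 ^ (4 * s) := by
      push_cast
      gcongr <;> norm_num

/-- **Lemma 3 (counting connected sets at prescribed horizontal distance from
a set).** Let `A ⊂ ℤ²` be finite. For all `s ≥ 2` and `1 ≤ d < ∞`, the number
of connected subsets `S ⊂ ℤ²` with `|S| = s` and `dist_h(S,A) = d` is at most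
`(32/3)·|A|·4^{4s}`. -/
theorem count_connected_at_hdist (A : Finset Site) (s d : ℕ)
    (hs : 2 ≤ s) (hd : 1 ≤ d) :
    {S : Finset Site | ConnectedIn S ∧ S.card = s ∧ hDistEq S A d}.Finite ∧
    ({S : Finset Site | ConnectedIn S ∧ S.card = s ∧ hDistEq S A d}.ncard : ℝ) ≤
      32 / 3 * (A.card : ℝ) * 4 ^ (4 * s) :=
  count_connected_at_hdist_general A s d
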